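/- For f ∈ L¹(0,∞) real-valued and every s > 0, ∫₀ˢ μ(t; f₊) dt = sup{ ∫ f·a dm : a measurable, 0 ≤ a ≤ 1, ∫ a dm = s }. -/

import Mathlib

open MeasureTheory Set

/-!
Write `g = f₊`, `D(l) = |{g > l}|` and `L = μ(s; g)`. Both sides equal `∫₀^∞ min(s, D(l)) dl`.
For the rearrangement this is the layer cake formula, since `{t ∈ (0, s] : μ(t; g) > l}` has
measure `min(s, D(l))`. For a weight `a`, the layer cake formula for the measure `a dm` gives
`∫ g a = ∫₀^∞ (∫_{g > l} a) dl` with `∫_{g > l} a ≤ min(s, D(l))`, and equality holds for every `l`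
as soon as `a = 1` on `{g > L}` and `a = 0` off `{g ≥ L}`. If `L > 0` such a weight exists
because `|{g > L}| ≤ s ≤ |{g ≥ L}|`, and there `f = g`. If `L = 0`, take `a = 1` on `{f > 0}` and
a small constant on a large set, so that `∫ f₋ a` is as small as we like.
-/

/-- Decreasing rearrangement of `|f|` with respect to Lebesgue measure on `(0,∞)`. -/
noncomputable def rearr (f : ℝ → ℝ) (t : ℝ) : ℝ :=
  sInf {s : ℝ | 0 ≤ s ∧ (volume.restrict (Set.Ioi (0:ℝ))) {x | s < |f x|} ≤ ENNReal.ofReal t}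

/-- Positive part of a function. -/
noncomputable def posPart' (f : ℝ → ℝ) : ℝ → ℝ := fun t => max (f t) 0

/-- Negative part of a function. -/
noncomputable def negPart' (f : ℝ → ℝ) : ℝ → ℝ := fun t => max (-f t) 0

/-- Hardy–Littlewood–Pólya submajorization on `(0,∞)`. -/
def SubMaj (f g : ℝ → ℝ) : Prop :=
  ∀ t : ℝ, 0 ≤ t →
    (∫ s in Set.Ioc (0:ℝ) t, rearr f s) ≤ ∫ s in Set.Ioc (0:ℝ) t, rearr g s

/-- Hardy–Littlewood–Pólya majorization on `(0,∞)`: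
`f₊ ≺≺ g₊`, `f₋ ≺≺ g₋` and `∫ f = ∫ g`. -/
def Maj (f g : ℝ → ℝ) : Prop :=
  SubMaj (posPart' f) (posPart' g) ∧ SubMaj (negPart' f) (negPart' g) ∧
    (∫ t in Set.Ioi (0:ℝ), f t) = ∫ t in Set.Ioi (0:ℝ), g t

open Filter Topology
open scoped ENNReal

local notation "ν" => volume.restrict (Ioi (0:ℝ))

section WeightedLayerCake

variable {α : Type*} [MeasurableSpace α] {μ : Measure α} {w : α → ℝ≥0∞}

theorem setLIntegral_le_min_lintegral_measure (hw : ∀ x, w x ≤ 1) (E : Set α) :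
    ∫⁻ x in E, w x ∂μ ≤ min (∫⁻ x, w x ∂μ) (μ E) :=
  le_min (setLIntegral_le_lintegral E w) ((lintegral_mono hw).trans_eq (setLIntegral_one E))

theorem setLIntegral_eq_min_lintegral_measure (hw : ∀ x, w x ≤ 1) {E : Set α}
    (hE : MeasurableSet E) (h : (∀ x ∈ E, w x = 1) ∨ ∀ x ∉ E, w x = 0) :
    ∫⁻ x in E, w x ∂μ = min (∫⁻ x, w x ∂μ) (μ E) := by
  refine le_antisymm (setLIntegral_le_min_lintegral_measure hw E) ?_
  rcases h with h | h
  · exact (min_le_right _ _).trans_eq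
      ((setLIntegral_congr_fun hE h).trans (setLIntegral_one E)).symm
  · exact (min_le_left _ _).trans_eq
      (setLIntegral_eq_of_support_subset fun x hx => by_contra fun hxE => hx (h x hxE)).symm

variable {φ : α → ℝ}

/-- Layer cake formula for the measure with density `w`. -/
theorem lintegral_mul_ofReal_eq_lintegral_setLIntegral (hw : Measurable w) (hφ : Measurable φ)
    (hφ0 : ∀ x, 0 ≤ φ x) :
    ∫⁻ x, w x * ENNReal.ofReal (φ x) ∂μ = ∫⁻ l in Ioi 0, ∫⁻ x in {x | l < φ x}, w x ∂μ := by
  calc ∫⁻ x, w x * ENNReal.ofReal (φ x) ∂μ = ∫⁻ x, ENNReal.ofReal (φ x) ∂μ.withDensity w :=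
        (lintegral_withDensity_eq_lintegral_mul₀ hw.aemeasurable
          hφ.ennreal_ofReal.aemeasurable).symm
    _ = ∫⁻ l in Ioi 0, μ.withDensity w {x | l < φ x} :=
        lintegral_eq_lintegral_meas_lt _ (ae_of_all _ hφ0) hφ.aemeasurable
    _ = _ := lintegral_congr fun l => withDensity_apply _ (measurableSet_lt measurable_const hφ)

theorem lintegral_mul_ofReal_le_lintegral_min (hw : Measurable w) (hw1 : ∀ x, w x ≤ 1)
    (hφ : Measurable φ) (hφ0 : ∀ x, 0 ≤ φ x) :
    ∫⁻ x, w x * ENNReal.ofReal (φ x) ∂μ ≤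
      ∫⁻ l in Ioi 0, min (∫⁻ x, w x ∂μ) (μ {x | l < φ x}) := by
  rw [lintegral_mul_ofReal_eq_lintegral_setLIntegral hw hφ hφ0]
  exact lintegral_mono fun l => setLIntegral_le_min_lintegral_measure hw1 _

theorem lintegral_mul_ofReal_eq_lintegral_min (hw : Measurable w) (hw1 : ∀ x, w x ≤ 1)
    (hφ : Measurable φ) (hφ0 : ∀ x, 0 ≤ φ x)
    (h : ∀ l > 0, (∀ x, l < φ x → w x = 1) ∨ ∀ x, ¬ l < φ x → w x = 0) :
    ∫⁻ x, w x * ENNReal.ofReal (φ x) ∂μ =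
      ∫⁻ l in Ioi 0, min (∫⁻ x, w x ∂μ) (μ {x | l < φ x}) := by
  rw [lintegral_mul_ofReal_eq_lintegral_setLIntegral hw hφ hφ0]
  exact setLIntegral_congr_fun measurableSet_Ioi fun l hl =>
    setLIntegral_eq_min_lintegral_measure hw1 (measurableSet_lt measurable_const hφ) (h l hl)

end WeightedLayerCake

theorem MeasureTheory.Integrable.mul_of_mem_Icc {α : Type*} [MeasurableSpace α] {μ : Measure α}
    {f a : α → ℝ} (hf : Integrable f μ) (ha : AEStronglyMeasurable a μ)
    (ha01 : ∀ x, a x ∈ Icc (0:ℝ) 1) : Integrable (fun x => f x * a x) μ :=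
  hf.mul_bdd ha (c := 1) <| ae_of_all _ fun x => by
    rw [Real.norm_eq_abs, abs_of_nonneg (ha01 x).1]
    exact (ha01 x).2

theorem exists_mem_Icc_add_mul_eq {a b s : ℝ} (hb : 0 ≤ b) (has : a ≤ s) (hsb : s ≤ a + b) :
    ∃ c ∈ Icc (0:ℝ) 1, a + c * b = s := by
  rcases hb.eq_or_lt with rfl | hb
  · exact ⟨0, ⟨le_rfl, zero_le_one⟩, by linarith⟩
  refine ⟨(s - a) / b, ⟨div_nonneg (by linarith) hb.le, (div_le_one hb).2 (by linarith)⟩, ?_⟩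
  field_simp
  ring

section StepWeight

variable {α : Type*} {A G : Set α} {c : ℝ}

noncomputable def stepWeight (A G : Set α) (c : ℝ) (x : α) : ℝ :=
  A.indicator (fun _ => 1) x + G.indicator (fun _ => c) x

theorem stepWeight_mem_Icc (hAG : Disjoint A G) (hc : c ∈ Icc (0:ℝ) 1) (x : α) :
    stepWeight A G c x ∈ Icc (0:ℝ) 1 := by
  by_cases hxA : x ∈ A
  · simp [stepWeight, hxA, hAG.notMem_of_mem_left hxA]
  · by_cases hxG : x ∈ G <;> simp [stepWeight, hxA, hxG, hc.1, hc.2]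

theorem stepWeight_of_mem_left (hAG : Disjoint A G) {x : α} (hx : x ∈ A) :
    stepWeight A G c x = 1 := by
  simp [stepWeight, hx, hAG.notMem_of_mem_left hx]

theorem stepWeight_of_notMem {x : α} (hxA : x ∉ A) (hxG : x ∉ G) : stepWeight A G c x = 0 := by
  simp [stepWeight, hxA, hxG]

theorem stepWeight_le_of_notMem_left (hc : 0 ≤ c) {x : α} (hx : x ∉ A) :
    stepWeight A G c x ≤ c := by
  by_cases hxG : x ∈ G <;> simp [stepWeight, hx, hxG, hc]

variable [MeasurableSpace α] {μ : Measure α}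

theorem measurable_stepWeight (hA : MeasurableSet A) (hG : MeasurableSet G) :
    Measurable (stepWeight A G c) :=
  (measurable_const.indicator hA).add (measurable_const.indicator hG)

theorem integral_stepWeight (hA : MeasurableSet A) (hG : MeasurableSet G) (hAfin : μ A ≠ ∞)
    (hGfin : μ G ≠ ∞) :
    ∫ x, stepWeight A G c x ∂μ = μ.real A + c * μ.real G := by
  simp only [stepWeight]
  rw [integral_add ((integrableOn_const hAfin).integrable_indicator hA)
    ((integrableOn_const hGfin).integrable_indicator hG), integral_indicator_const _ hA,
    integral_indicator_const _ hG, smul_eq_mul, smul_eq_mul, mul_one, mul_comm]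

end StepWeight

theorem measure_lt_eq_iSup {α : Type*} [MeasurableSpace α] (μ : Measure α) (φ : α → ℝ) {l : ℝ}
    {u : ℕ → ℝ} (hu : Antitone u) (hlu : ∀ n, l < u n) (hul : Tendsto u atTop (𝓝 l)) :
    μ {x | l < φ x} = ⨆ n, μ {x | u n < φ x} := by
  have hU : {x | l < φ x} = ⋃ n, {x | u n < φ x} := by
    ext x
    simp only [mem_ofPred_eq, mem_iUnion]
    exact ⟨fun hx => (hul.eventually (gt_mem_nhds hx)).exists,
      fun ⟨n, hn⟩ => (hlu n).trans hn⟩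
  rw [hU]
  exact Monotone.measure_iUnion fun m n hmn x (hx : u m < φ x) => (hu hmn).trans_lt hx

section Rearrangement

variable {g : ℝ → ℝ} {s t l : ℝ}

theorem rearr_nonneg (g : ℝ → ℝ) (t : ℝ) : 0 ≤ rearr g t :=
  Real.sInf_nonneg fun _ hl => hl.1

theorem measure_lt_abs_ne_top (hg : IntegrableOn g (Ioi 0)) (hl : 0 < l) :
    ν {x | l < |g x|} ≠ ∞ := by
  simpa only [Real.norm_eq_abs] using (hg.measure_norm_gt_lt_top hl).ne

theorem exists_measure_lt_abs_le (hg : IntegrableOn g (Ioi 0)) (ht : 0 < t) :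
    ∃ l, 0 ≤ l ∧ ν {x | l < |g x|} ≤ ENNReal.ofReal t := by
  have hE : Antitone fun n : ℕ => {x | (n : ℝ) < |g x|} := fun m n hmn x (hx : (n : ℝ) < |g x|) =>
    (Nat.cast_le.2 hmn).trans_lt hx
  have hlim := tendsto_measure_iInter_atTop
    (fun n => nullMeasurableSet_lt aemeasurable_const hg.1.aemeasurable.abs) hE
    ⟨1, measure_lt_abs_ne_top hg (by norm_num)⟩
  have hempty : ⋂ n : ℕ, {x | (n : ℝ) < |g x|} = ∅ :=
    iInter_eq_empty_iff.2 fun x => (exists_nat_ge |g x|).imp fun n hn => not_lt.2 hn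
  rw [hempty, measure_empty] at hlim
  obtain ⟨n, hn⟩ := (hlim.eventually (gt_mem_nhds (ENNReal.ofReal_pos.2 ht))).exists
  exact ⟨n, n.cast_nonneg, hn.le⟩

theorem rearr_le_iff (hg : IntegrableOn g (Ioi 0)) (ht : 0 < t) (hl : 0 ≤ l) :
    rearr g t ≤ l ↔ ν {x | l < |g x|} ≤ ENNReal.ofReal t := by
  refine ⟨fun h => ?_, fun h => csInf_le ⟨0, fun _ hm => hm.1⟩ ⟨hl, h⟩⟩
  obtain ⟨u, hu, hlu, hul⟩ := exists_seq_strictAnti_tendsto l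
  rw [measure_lt_eq_iSup _ _ hu.antitone hlu hul]
  refine iSup_le fun n => ?_
  obtain ⟨l', ⟨-, hl'⟩, hl'u⟩ :=
    exists_lt_of_csInf_lt (exists_measure_lt_abs_le hg ht) (h.trans_lt (hlu n))
  exact (measure_mono fun x (hx : u n < |g x|) => hl'u.trans hx).trans hl'

theorem lt_rearr_iff (hg : IntegrableOn g (Ioi 0)) (ht : 0 < t) (hl : 0 ≤ l) :
    l < rearr g t ↔ ENNReal.ofReal t < ν {x | l < |g x|} := by
  simpa only [not_le] using (rearr_le_iff hg ht hl).not

theorem antitoneOn_rearr (hg : IntegrableOn g (Ioi 0)) : AntitoneOn (rearr g) (Ioi 0) :=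
  fun _ ht _ _ hts => csInf_le_csInf ⟨0, fun _ hm => hm.1⟩ (exists_measure_lt_abs_le hg ht)
    fun _ hl => ⟨hl.1, hl.2.trans (ENNReal.ofReal_le_ofReal hts)⟩

theorem measure_rearr_lt_abs_le (hg : IntegrableOn g (Ioi 0)) (ht : 0 < t) :
    ν {x | rearr g t < |g x|} ≤ ENNReal.ofReal t :=
  (rearr_le_iff hg ht (rearr_nonneg g t)).1 le_rfl

theorem ofReal_le_measure_rearr_le_abs (hg : IntegrableOn g (Ioi 0)) (ht : 0 < t)
    (hpos : 0 < rearr g t) : ENNReal.ofReal t ≤ ν {x | rearr g t ≤ |g x|} := by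
  obtain ⟨u, hu, hu0L, hul⟩ := exists_seq_strictMono_tendsto' hpos
  have hI : {x | rearr g t ≤ |g x|} = ⋂ n, {x | u n < |g x|} := by
    ext x
    simp only [mem_ofPred_eq, mem_iInter]
    exact ⟨fun hx n => (hu0L n).2.trans_le hx, fun hx => le_of_tendsto' hul fun n => (hx n).le⟩
  have hE : Antitone fun n => {x | u n < |g x|} := fun m n hmn x (hx : u n < |g x|) =>
    (hu.monotone hmn).trans_lt hx
  rw [hI, hE.measure_iInter (fun n => nullMeasurableSet_lt aemeasurable_const hg.1.aemeasurable.abs)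
    ⟨0, measure_lt_abs_ne_top hg (hu0L 0).1⟩]
  exact le_iInf fun n => ((lt_rearr_iff hg ht (hu0L n).1.le).1 (hu0L n).2).le

theorem volume_Ioc_inter_ofReal_lt (s : ℝ) (D : ℝ≥0∞) :
    volume (Ioc 0 s ∩ {t | ENNReal.ofReal t < D}) = min (ENNReal.ofReal s) D := by
  rcases eq_or_ne D ∞ with rfl | hD
  · simp
  lift D to NNReal using hD
  have hset : Ioc 0 s ∩ {t | ENNReal.ofReal t < D} = Ioc 0 s ∩ Iio (D : ℝ) := by
    ext t
    exact and_congr_right fun ht => by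
      rw [mem_ofPred_eq, ENNReal.ofReal, ENNReal.coe_lt_coe, Real.toNNReal_lt_iff_lt_coe ht.1.le,
        mem_Iio]
  rw [hset, measure_congr ((Ioo_ae_eq_Ioc (μ := volume)).symm.inter (ae_eq_refl (Iio (D : ℝ)))),
    Ioo_inter_Iio, Real.volume_Ioo, sub_zero, ENNReal.ofReal_min, ENNReal.ofReal_coe_nnreal]

theorem setIntegral_rearr (hg : IntegrableOn g (Ioi 0)) (s : ℝ) :
    ∫ t in Ioc 0 s, rearr g t =
      (∫⁻ l in Ioi 0, min (ENNReal.ofReal s) (ν {x | l < |g x|})).toReal := by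
  have hmeas : AEMeasurable (rearr g) (volume.restrict (Ioc 0 s)) :=
    aemeasurable_restrict_of_antitoneOn measurableSet_Ioc
      ((antitoneOn_rearr hg).mono Ioc_subset_Ioi_self)
  rw [integral_eq_lintegral_of_nonneg_ae (ae_of_all _ (rearr_nonneg g)) hmeas.aestronglyMeasurable,
    lintegral_eq_lintegral_meas_lt _ (ae_of_all _ (rearr_nonneg g)) hmeas]
  congr 1
  refine setLIntegral_congr_fun measurableSet_Ioi fun l hl => ?_
  rw [Measure.restrict_apply' measurableSet_Ioc, inter_comm, ← volume_Ioc_inter_ofReal_lt]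
  congr 1
  ext t
  exact and_congr_right fun ht => lt_rearr_iff hg ht.1 (le_of_lt hl)

theorem rearr_congr_ae {g' : ℝ → ℝ} (h : g =ᵐ[ν] g') : rearr g = rearr g' := by
  have hD : ∀ l, ν {x | l < |g x|} = ν {x | l < |g' x|} := fun l =>
    measure_congr (h.fun_comp fun y => l < |y|)
  ext t
  simp only [rearr, hD]

end Rearrangement

section PositivePart

variable {f a : ℝ → ℝ} {s : ℝ}

theorem abs_posPart' (f : ℝ → ℝ) (x : ℝ) : |posPart' f x| = posPart' f x :=
  abs_of_nonneg (le_max_right _ _)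

theorem Measurable.posPart' (hf : Measurable f) : Measurable (posPart' f) :=
  hf.max measurable_const

theorem MeasureTheory.IntegrableOn.posPart' (hf : IntegrableOn f (Ioi 0)) :
    IntegrableOn (posPart' f) (Ioi 0) :=
  Integrable.pos_part hf

theorem lintegral_ofReal_eq_of_setIntegral_eq (hs : 0 < s) (ha01 : ∀ t, a t ∈ Icc (0:ℝ) 1)
    (has : ∫ t in Ioi 0, a t = s) : ∫⁻ t in Ioi 0, ENNReal.ofReal (a t) = ENNReal.ofReal s := by
  have hai : IntegrableOn a (Ioi 0) := by
    by_contra h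
    rw [integral_undef h] at has
    exact hs.ne has
  rw [← has, ofReal_integral_eq_lintegral_ofReal hai (ae_of_all _ fun t => (ha01 t).1)]

theorem MeasureTheory.IntegrableOn.negPart' (hf : IntegrableOn f (Ioi 0)) :
    IntegrableOn (negPart' f) (Ioi 0) :=
  Integrable.pos_part hf.neg

theorem setIntegral_mul_eq_sub (hfi : IntegrableOn f (Ioi 0)) (ha : Measurable a)
    (ha01 : ∀ t, a t ∈ Icc (0:ℝ) 1) :
    ∫ t in Ioi 0, f t * a t =
      (∫ t in Ioi 0, posPart' f t * a t) - ∫ t in Ioi 0, negPart' f t * a t := by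
  refine (integral_congr_ae (ae_of_all _ fun t => ?_)).trans
    (integral_sub (hfi.posPart'.mul_of_mem_Icc ha.aestronglyMeasurable ha01)
      (hfi.negPart'.mul_of_mem_Icc ha.aestronglyMeasurable ha01))
  rw [← sub_mul, posPart', negPart', max_zero_sub_max_neg_zero_eq_self]

theorem setIntegral_negPart'_mul_le (hfi : IntegrableOn f (Ioi 0)) (ha : Measurable a)
    (ha01 : ∀ t, a t ∈ Icc (0:ℝ) 1) {c : ℝ} (hc : ∀ t, f t < 0 → a t ≤ c) :
    ∫ t in Ioi 0, negPart' f t * a t ≤ c * ∫ t in Ioi 0, negPart' f t := by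
  rw [← integral_const_mul]
  refine integral_mono (hfi.negPart'.mul_of_mem_Icc ha.aestronglyMeasurable ha01)
    (hfi.negPart'.const_mul c) fun t => ?_
  rcases lt_or_ge (f t) 0 with hft | hft
  · rw [mul_comm]
    exact mul_le_mul_of_nonneg_right (hc t hft) (le_max_right _ _)
  · simp [negPart', hft]

theorem setIntegral_rearr_posPart' (hf : IntegrableOn f (Ioi 0)) (s : ℝ) :
    ∫ t in Ioc 0 s, rearr (posPart' f) t =
      (∫⁻ l in Ioi 0, min (ENNReal.ofReal s) (ν {x | l < posPart' f x})).toReal := by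
  simpa only [abs_posPart'] using setIntegral_rearr hf.posPart' s

theorem lintegral_min_measure_posPart'_lt_top (hf : Measurable f)
    (hfi : IntegrableOn f (Ioi 0)) (s : ℝ) :
    ∫⁻ l in Ioi 0, min (ENNReal.ofReal s) (ν {x | l < posPart' f x}) < ∞ :=
  calc ∫⁻ l in Ioi 0, min (ENNReal.ofReal s) (ν {x | l < posPart' f x})
      ≤ ∫⁻ l in Ioi 0, ν {x | l < posPart' f x} := lintegral_mono fun _ => min_le_right _ _
    _ = ∫⁻ x in Ioi 0, ENNReal.ofReal (posPart' f x) :=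
        (lintegral_eq_lintegral_meas_lt _ (ae_of_all _ fun _ => le_max_right _ _)
          hf.posPart'.aemeasurable).symm
    _ < ∞ := hfi.posPart'.lintegral_lt_top

theorem setIntegral_posPart'_mul (hf : Measurable f) (ha : Measurable a)
    (ha01 : ∀ t, a t ∈ Icc (0:ℝ) 1) :
    ∫ t in Ioi 0, posPart' f t * a t =
      (∫⁻ t in Ioi 0, ENNReal.ofReal (a t) * ENNReal.ofReal (posPart' f t)).toReal := by
  rw [integral_eq_lintegral_of_nonneg_ae (f := fun t => posPart' f t * a t)
    (ae_of_all _ fun t => mul_nonneg (le_max_right _ _) (ha01 t).1)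
    (hf.posPart'.mul ha).aestronglyMeasurable]
  congr 1
  exact lintegral_congr fun t => by rw [mul_comm, ENNReal.ofReal_mul (ha01 t).1]

theorem setIntegral_mul_le_setIntegral_rearr (hf : Measurable f) (hfi : IntegrableOn f (Ioi 0))
    (hs : 0 < s) (ha : Measurable a) (ha01 : ∀ t, a t ∈ Icc (0:ℝ) 1)
    (has : ∫ t in Ioi 0, a t = s) :
    ∫ t in Ioi 0, f t * a t ≤ ∫ t in Ioc 0 s, rearr (posPart' f) t := by
  have hw := lintegral_mul_ofReal_le_lintegral_min (μ := ν) ha.ennreal_ofReal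
    (fun t => ENNReal.ofReal_le_one.2 (ha01 t).2) hf.posPart' fun _ => le_max_right _ _
  rw [lintegral_ofReal_eq_of_setIntegral_eq hs ha01 has] at hw
  calc ∫ t in Ioi 0, f t * a t ≤ ∫ t in Ioi 0, posPart' f t * a t :=
        integral_mono (hfi.mul_of_mem_Icc ha.aestronglyMeasurable ha01)
          (hfi.posPart'.mul_of_mem_Icc ha.aestronglyMeasurable ha01)
          fun t => mul_le_mul_of_nonneg_right (le_max_left _ _) (ha01 t).1
    _ ≤ ∫ t in Ioc 0 s, rearr (posPart' f) t := by
        rw [setIntegral_posPart'_mul hf ha ha01, setIntegral_rearr_posPart' hfi]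
        exact ENNReal.toReal_mono (lintegral_min_measure_posPart'_lt_top hf hfi s).ne hw

theorem setIntegral_rearr_eq_setIntegral_posPart'_mul (hf : Measurable f)
    (hfi : IntegrableOn f (Ioi 0)) (hs : 0 < s) (ha : Measurable a)
    (ha01 : ∀ t, a t ∈ Icc (0:ℝ) 1) (has : ∫ t in Ioi 0, a t = s)
    (h : ∀ l > 0, (∀ x, l < posPart' f x → a x = 1) ∨ ∀ x, ¬ l < posPart' f x → a x = 0) :
    ∫ t in Ioc 0 s, rearr (posPart' f) t = ∫ t in Ioi 0, posPart' f t * a t := by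
  have hw := lintegral_mul_ofReal_eq_lintegral_min (μ := ν) ha.ennreal_ofReal
    (fun t => ENNReal.ofReal_le_one.2 (ha01 t).2) hf.posPart' (fun _ => le_max_right _ _)
    fun l hl => (h l hl).imp (fun h1 x hx => by rw [h1 x hx, ENNReal.ofReal_one])
      fun h0 x hx => by rw [h0 x hx, ENNReal.ofReal_zero]
  rw [lintegral_ofReal_eq_of_setIntegral_eq hs ha01 has] at hw
  rw [setIntegral_posPart'_mul hf ha ha01, setIntegral_rearr_posPart' hfi, hw]

end PositivePart

section OptimalWeights

variable {f : ℝ → ℝ} {s : ℝ}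

theorem exists_weight_eq_of_rearr_pos (hf : Measurable f) (hfi : IntegrableOn f (Ioi 0))
    (hs : 0 < s) (hL : 0 < rearr (posPart' f) s) :
    ∃ a : ℝ → ℝ, Measurable a ∧ (∀ t, a t ∈ Icc (0:ℝ) 1) ∧ ∫ t in Ioi 0, a t = s ∧
      ∫ t in Ioc 0 s, rearr (posPart' f) t = ∫ t in Ioi 0, f t * a t := by
  set L := rearr (posPart' f) s
  set A := {x | L < posPart' f x}
  set B := {x | L ≤ posPart' f x}
  have hA : MeasurableSet A := measurableSet_lt measurable_const hf.posPart'
  have hB : MeasurableSet B := measurableSet_le measurable_const hf.posPart'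
  have hAB : A ⊆ B := fun x (hx : L < posPart' f x) => (le_of_lt hx : L ≤ posPart' f x)
  have hAs : ν A ≤ ENNReal.ofReal s := by
    simpa only [abs_posPart'] using measure_rearr_lt_abs_le hfi.posPart' hs
  have hBs : ENNReal.ofReal s ≤ ν B := by
    simpa only [abs_posPart'] using ofReal_le_measure_rearr_le_abs hfi.posPart' hs hL
  have hBfin : ν B ≠ ∞ := (hfi.posPart'.measure_ge_lt_top hL).ne
  obtain ⟨c, hc, hcs⟩ := exists_mem_Icc_add_mul_eq measureReal_nonneg
    (ENNReal.toReal_le_of_le_ofReal hs.le hAs) (a := (ν).real A) (b := (ν).real (B \ A)) (by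
      rw [measureReal_sdiff hAB hA hBfin, add_sub_cancel]
      exact (ENNReal.ofReal_le_iff_le_toReal hBfin).1 hBs)
  set a := stepWeight A (B \ A) c
  have ha : Measurable a := measurable_stepWeight hA (hB.diff hA)
  have ha01 : ∀ t, a t ∈ Icc (0:ℝ) 1 := stepWeight_mem_Icc disjoint_sdiff_right hc
  have has : ∫ t in Ioi 0, a t = s := by
    rwa [integral_stepWeight hA (hB.diff hA) (ne_top_of_le_ne_top hBfin (measure_mono hAB))
      (ne_top_of_le_ne_top hBfin (measure_mono sdiff_subset))]
  have hsupp : ∀ x, a x ≠ 0 → L ≤ posPart' f x := fun x hx => by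
    by_contra h
    exact hx (stepWeight_of_notMem (fun hxA => h (hAB hxA)) fun hxBA => h hxBA.1)
  refine ⟨a, ha, ha01, has, ?_⟩
  rw [setIntegral_rearr_eq_setIntegral_posPart'_mul hf hfi hs ha ha01 has fun l _ => ?_]
  · refine setIntegral_congr_fun measurableSet_Ioi fun t _ => ?_
    by_cases h : a t = 0
    · simp [h]
    · have hft : 0 < f t := (lt_max_iff.1 (hL.trans_le (hsupp t h))).resolve_right (lt_irrefl 0)
      exact congrArg (· * a t) (max_eq_left hft.le)
  · rcases le_or_gt L l with hLl | hlL
    · exact .inl fun x hx => stepWeight_of_mem_left disjoint_sdiff_right (hLl.trans_lt hx)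
    · exact .inr fun x hx => by_contra fun h => hx (hlL.trans_le (hsupp x h))

theorem exists_disjoint_measureReal_ge {A : Set ℝ} (hA : MeasurableSet A) (hAfin : ν A ≠ ∞)
    (M : ℝ) : ∃ G, MeasurableSet G ∧ Disjoint A G ∧ ν G ≠ ∞ ∧ M ≤ (ν).real G := by
  set T := (ν).real A + max M 0
  have hT : (ν).real (Ioc 0 T) = T := by
    rw [measureReal_restrict_apply measurableSet_Ioc, inter_eq_left.2 Ioc_subset_Ioi_self,
      Real.volume_real_Ioc_of_le (by positivity), sub_zero]
  refine ⟨Ioc 0 T \ A, measurableSet_Ioc.diff hA, disjoint_sdiff_right,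
    ne_top_of_le_ne_top ((Measure.restrict_apply_le _ _).trans_lt measure_Ioc_lt_top).ne
      (measure_mono sdiff_subset), ?_⟩
  calc M ≤ (ν).real (Ioc 0 T) - (ν).real A := by rw [hT]; linarith [le_max_left M 0]
    _ ≤ (ν).real (Ioc 0 T \ A) := le_measureReal_sdiff hAfin

theorem exists_weight_le_add_of_rearr_eq_zero (hf : Measurable f) (hfi : IntegrableOn f (Ioi 0))
    (hs : 0 < s) (hL : rearr (posPart' f) s = 0) {ε : ℝ} (hε : 0 < ε) :
    ∃ a : ℝ → ℝ, Measurable a ∧ (∀ t, a t ∈ Icc (0:ℝ) 1) ∧ ∫ t in Ioi 0, a t = s ∧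
      ∫ t in Ioc 0 s, rearr (posPart' f) t ≤ (∫ t in Ioi 0, f t * a t) + ε := by
  set A := {x | 0 < posPart' f x}
  have hA : MeasurableSet A := measurableSet_lt measurable_const hf.posPart'
  have hAs : ν A ≤ ENNReal.ofReal s := by
    simpa only [abs_posPart', hL] using measure_rearr_lt_abs_le hfi.posPart' hs
  have hAfin : ν A ≠ ∞ := ne_top_of_le_ne_top ENNReal.ofReal_ne_top hAs
  set I := ∫ t in Ioi 0, negPart' f t
  have hI : 0 ≤ I := integral_nonneg fun _ => le_max_right _ _
  -- `|G| ≥ s ∫ f₋ / ε` forces the weight `c` on `G` to satisfy `c ∫ f₋ ≤ ε`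
  obtain ⟨G, hG, hAG, hGfin, hGM⟩ := exists_disjoint_measureReal_ge hA hAfin (s + s * I / ε)
  have hsIε : 0 ≤ s * I / ε := by positivity
  obtain ⟨c, hc, hcs⟩ := exists_mem_Icc_add_mul_eq measureReal_nonneg
    (ENNReal.toReal_le_of_le_ofReal hs.le hAs) (a := (ν).real A) (b := (ν).real G)
    (by linarith [measureReal_nonneg (μ := ν) (s := A)])
  have hcI : c * I ≤ ε := by
    have hcG : c * (ν).real G ≤ s := by linarith [measureReal_nonneg (μ := ν) (s := A)]
    have h : c * (s * I / ε) ≤ s :=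
      (mul_le_mul_of_nonneg_left (show s * I / ε ≤ (ν).real G by linarith) hc.1).trans hcG
    rw [mul_div_assoc', div_le_iff₀ hε] at h
    nlinarith
  set a := stepWeight A G c
  have ha : Measurable a := measurable_stepWeight hA hG
  have ha01 : ∀ t, a t ∈ Icc (0:ℝ) 1 := stepWeight_mem_Icc hAG hc
  have has : ∫ t in Ioi 0, a t = s := by rwa [integral_stepWeight hA hG hAfin hGfin]
  refine ⟨a, ha, ha01, has, ?_⟩
  have hneg := setIntegral_negPart'_mul_le hfi ha ha01 fun t ht =>
    stepWeight_le_of_notMem_left hc.1 fun htA : 0 < max (f t) 0 => by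
      simp [ht.le] at htA
  rw [setIntegral_rearr_eq_setIntegral_posPart'_mul hf hfi hs ha ha01 has
    fun l hl => .inl fun x hx => stepWeight_of_mem_left hAG (hl.trans hx),
    setIntegral_mul_eq_sub hfi ha ha01]
  linarith

theorem isLUB_setIntegral_mul (hf : Measurable f) (hfi : IntegrableOn f (Ioi 0)) (hs : 0 < s) :
    IsLUB {r : ℝ | ∃ a : ℝ → ℝ, Measurable a ∧ (∀ t, a t ∈ Icc (0:ℝ) 1) ∧
      (∫ t in Ioi 0, a t) = s ∧ r = ∫ t in Ioi 0, f t * a t}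
      (∫ t in Ioc 0 s, rearr (posPart' f) t) := by
  refine ⟨?_, fun b hb => le_of_forall_pos_le_add fun ε hε => ?_⟩
  · rintro r ⟨a, ha, ha01, has, rfl⟩
    exact setIntegral_mul_le_setIntegral_rearr hf hfi hs ha ha01 has
  obtain ⟨a, ha, ha01, has, hle⟩ : ∃ a : ℝ → ℝ, Measurable a ∧ (∀ t, a t ∈ Icc (0:ℝ) 1) ∧
      ∫ t in Ioi 0, a t = s ∧
      ∫ t in Ioc 0 s, rearr (posPart' f) t ≤ (∫ t in Ioi 0, f t * a t) + ε := by
    rcases (rearr_nonneg (posPart' f) s).eq_or_lt with hL | hL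
    · exact exists_weight_le_add_of_rearr_eq_zero hf hfi hs hL.symm hε
    · obtain ⟨a, ha, ha01, has, heq⟩ := exists_weight_eq_of_rearr_pos hf hfi hs hL
      exact ⟨a, ha, ha01, has, heq.trans_le (le_add_of_nonneg_right hε.le)⟩
  exact hle.trans (add_le_add_left (hb ⟨a, ha, ha01, has, rfl⟩) ε)

end OptimalWeights

/-- `∫₀ˢ μ(t; f₊) dt = sup { ∫ f·a dm : a measurable, 0 ≤ a ≤ 1, ∫ a dm = s }`. -/
theorem stmt7 (f : ℝ → ℝ) (hf : IntegrableOn f (Set.Ioi 0)) (s : ℝ) (hs : 0 < s) :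
    (∫ t in Set.Ioc (0:ℝ) s, rearr (posPart' f) t) =
      sSup {r : ℝ | ∃ a : ℝ → ℝ, Measurable a ∧ (∀ t, a t ∈ Set.Icc (0:ℝ) 1) ∧
        (∫ t in Set.Ioi (0:ℝ), a t) = s ∧ r = ∫ t in Set.Ioi (0:ℝ), f t * a t} := by
  obtain ⟨f', hf', hff'⟩ := hf.aemeasurable
  have hfa : ∀ a : ℝ → ℝ, ∫ t in Ioi 0, f t * a t = ∫ t in Ioi 0, f' t * a t := fun a =>
    integral_congr_ae (hff'.mono fun t (ht : f t = f' t) => congrArg (· * a t) ht)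
  have hlub := isLUB_setIntegral_mul hf' (hf.congr hff') hs
  simp only [hfa]
  rw [rearr_congr_ae (g := posPart' f) (g' := posPart' f') (hff'.fun_comp fun y => max y 0),
    hlub.csSup_eq hlub.nonempty]
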